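/- Fix δ ∈ (0,1). There exist C₄ ∈ (0,1) and μ₀ > 0, depending only on n and δ, such that for every ξ ∈ 𝕊^{n−1}, the set {y ∈ V_ξ : e₁ + y ∈ B_{1−C₄}(0)} has Lebesgue measure at least μ₀, where V_ξ = {z ∈ ℝⁿ : |⟨z/|z|, ξ⟩| ≥ δ}. -/
import Mathlib

open Metric Set MeasureTheory
open scoped RealInnerProductSpace

noncomputable section

/-- The double cone of opening `δ` around the direction `ξ`. -/
def secCone {n : ℕ} (δ : ℝ) (ξ : EuclideanSpace ℝ (Fin n)) : Set (EuclideanSpace ℝ (Fin n)) :=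
  {z | δ * ‖z‖ ≤ |⟪z, ξ⟫|}

set_option maxHeartbeats 800000

lemma helper_u {n : ℕ} {ξ e : EuclideanSpace ℝ (Fin n)} (hξ : ‖ξ‖ = 1)
    (he : ‖e‖ = 1) (ha : ⟪e, ξ⟫ ≤ 0) {δ'' c : ℝ} (hδ'' : δ'' ∈ Set.Ioo (0:ℝ) 1)
    (hc : c = Real.sqrt (1 - δ''^2)) :
    ∃ u : EuclideanSpace ℝ (Fin n), ‖u‖ = 1 ∧ δ'' ≤ ⟪u, ξ⟫ ∧ ⟪u, e⟫ ≤ -(min δ'' c) := by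
  obtain ⟨hδ0, hδ1⟩ := hδ''
  have hc0 : 0 < c := by
    rw [hc]; exact Real.sqrt_pos.mpr (by nlinarith)
  have hc2 : c ^ 2 = 1 - δ''^2 := by
    rw [hc]; exact Real.sq_sqrt (by nlinarith)
  set a : ℝ := ⟪e, ξ⟫ with ha_def
  set v : EuclideanSpace ℝ (Fin n) := e - a • ξ with hv_def
  have hξξ : ⟪ξ, ξ⟫ = (1:ℝ) := by
    rw [real_inner_self_eq_norm_sq, hξ]; norm_num
  have hvξ : ⟪v, ξ⟫ = (0:ℝ) := by
    rw [hv_def, inner_sub_left, real_inner_smul_left, hξξ, ← ha_def]; ring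
  have hξv : ⟪ξ, v⟫ = (0:ℝ) := by rw [real_inner_comm]; exact hvξ
  set b : ℝ := ‖v‖ with hb_def
  have hb2 : b^2 = 1 - a^2 := by
    rw [hb_def, hv_def, norm_sub_sq_real, real_inner_smul_right, ← ha_def,
      norm_smul, Real.norm_eq_abs, he, mul_pow, sq_abs, hξ]
    ring
  rcases eq_or_lt_of_le (norm_nonneg v) with hb0 | hb0
  · -- v = 0, e = a • ξ with a = -1
    have hv0 : v = 0 := by rw [← norm_eq_zero]; exact hb0.symm
    have hbz : b = 0 := by rw [hb_def]; exact hb0.symm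
    have ha2 : a^2 = 1 := by nlinarith
    have ham1 : a = -1 := by nlinarith
    have heξ : e = -ξ := by
      have h2 : e = a • ξ := by
        have := hv0; rw [hv_def, sub_eq_zero] at this; exact this
      rw [h2, ham1]; simp
    refine ⟨ξ, hξ, by rw [hξξ]; linarith, ?_⟩
    have h3 : ⟪ξ, e⟫ = (-1:ℝ) := by
      rw [heξ, inner_neg_right, hξξ]
    rw [h3]
    have : min δ'' c ≤ δ'' := min_le_left _ _
    linarith
  · -- general case
    have hbne : b ≠ 0 := ne_of_gt hb0
    set u : EuclideanSpace ℝ (Fin n) := δ'' • ξ - (c / b) • v with hu_def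
    have hbv : ⟪v, v⟫ = b^2 := by rw [real_inner_self_eq_norm_sq, hb_def]
    have hab : a^2 + b^2 = 1 := by linarith
    have huξ : ⟪u, ξ⟫ = δ'' := by
      rw [hu_def, inner_sub_left, real_inner_smul_left, real_inner_smul_left, hξξ, hvξ]
      ring
    have huv : ⟪u, v⟫ = -(c*b) := by
      rw [hu_def, inner_sub_left, real_inner_smul_left, real_inner_smul_left, hξv, hbv]
      field_simp
      ring
    have hunorm : ‖u‖ = 1 := by
      have h1 : ‖u‖^2 = 1 := by
        rw [hu_def, norm_sub_sq_real, real_inner_smul_left, real_inner_smul_right, hξv,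
          norm_smul, norm_smul, Real.norm_eq_abs, Real.norm_eq_abs, hξ, ← hb_def,
          abs_of_pos hδ0, abs_of_pos (div_pos hc0 hb0)]
        have hdm : c / b * b = c := div_mul_cancel₀ c hbne
        rw [hdm]
        nlinarith
      nlinarith [norm_nonneg u]
    have hue : ⟪u, e⟫ = δ'' * a - c * b := by
      have he2 : e = a • ξ + v := by rw [hv_def]; abel
      rw [he2, inner_add_right, real_inner_smul_right, huξ, huv]
      ring
    refine ⟨u, hunorm, le_of_eq huξ.symm, ?_⟩
    rw [hue]
    have h1 : min δ'' c ≤ δ'' := min_le_left _ _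
    have h2 : min δ'' c ≤ c := min_le_right _ _
    have hna : 0 ≤ -a := by linarith
    have hsum : (1:ℝ) ≤ (-a) + b := by nlinarith
    have hm0 : 0 ≤ min δ'' c := le_min hδ0.le hc0.le
    have h3 := mul_le_mul_of_nonneg_right h1 hna
    have h4 := mul_le_mul_of_nonneg_right h2 (le_of_lt hb0)
    have h5 := mul_le_mul_of_nonneg_left hsum hm0
    nlinarith [h3, h4, h5]

theorem stmt_7 {n : ℕ} (hn : 2 ≤ n) (δ : ℝ) (hδ : δ ∈ Set.Ioo (0 : ℝ) 1) :
    ∃ C₄ ∈ Set.Ioo (0 : ℝ) 1, ∃ μ₀ > (0 : ℝ),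
      ∀ ξ : EuclideanSpace ℝ (Fin n), ‖ξ‖ = 1 →
        ENNReal.ofReal μ₀ ≤
          volume {y ∈ secCone δ ξ |
            EuclideanSpace.single (⟨0, by omega⟩ : Fin n) (1 : ℝ) + y ∈
              ball (0 : EuclideanSpace ℝ (Fin n)) (1 - C₄)} := by
  obtain ⟨hδ0, hδ1⟩ := hδ
  set E := EuclideanSpace ℝ (Fin n)
  set e : E := EuclideanSpace.single (⟨0, by omega⟩ : Fin n) (1 : ℝ) with he_def
  have he : ‖e‖ = 1 := by
    rw [he_def, EuclideanSpace.norm_single]; norm_num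
  set δ'' : ℝ := (1 + δ) / 2 with hδ''_def
  have hδ''mem : δ'' ∈ Set.Ioo (0:ℝ) 1 := ⟨by rw [hδ''_def]; linarith, by rw [hδ''_def]; linarith⟩
  set c : ℝ := Real.sqrt (1 - δ''^2) with hc_def
  have hc0 : 0 < c := Real.sqrt_pos.mpr (by nlinarith [hδ''mem.1, hδ''mem.2])
  set ε : ℝ := min δ'' c with hε_def
  have hε0 : 0 < ε := lt_min hδ''mem.1 hc0
  have hε1 : ε < 1 := lt_of_le_of_lt (min_le_left _ _) hδ''mem.2
  set r : ℝ := min (ε^2/8) (ε*(1-δ)/4) with hr_def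
  have hr0 : 0 < r := lt_min (by nlinarith) (by nlinarith)
  set C₄ : ℝ := ε^2/8 with hC_def
  refine ⟨C₄, ⟨by rw [hC_def]; positivity, by rw [hC_def]; nlinarith⟩,
    (volume (ball (0:E) r)).toReal, ?_, ?_⟩
  · exact ENNReal.toReal_pos (measure_ball_pos volume 0 hr0).ne' measure_ball_lt_top.ne
  intro ξ hξ
  obtain ⟨σ, hσn, hσe, hσabs⟩ :
      ∃ σ : E, ‖σ‖ = 1 ∧ ⟪e, σ⟫ ≤ (0:ℝ) ∧ ∀ z : E, |⟪z, σ⟫| = |⟪z, ξ⟫| := by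
    rcases le_total (⟪e, ξ⟫ : ℝ) 0 with h | h
    · exact ⟨ξ, hξ, h, fun z => rfl⟩
    · refine ⟨-ξ, by rwa [norm_neg], ?_, fun z => ?_⟩
      · rw [inner_neg_right]; linarith
      · rw [inner_neg_right, abs_neg]
  obtain ⟨u, hun, huσ, hue⟩ := helper_u hσn he hσe hδ''mem hc_def
  set y₀ : E := ε • u with hy₀_def
  have hy₀n : ‖y₀‖ = ε := by
    rw [hy₀_def, norm_smul, hun, Real.norm_eq_abs, abs_of_pos hε0, mul_one]
  have hεle : ε ≤ δ'' := min_le_left _ _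
  have hsub : ball y₀ r ⊆
      {y ∈ secCone δ ξ | e + y ∈ ball (0 : E) (1 - C₄)} := by
    intro z hz
    rw [mem_ball, dist_eq_norm] at hz
    have hzy : ‖z - y₀‖ < r := hz
    have hzn : ‖z‖ < ε + r := by
      have h := norm_sub_norm_le z y₀
      rw [hy₀n] at h; linarith
    have hinner : ⟪z - y₀, σ⟫ ≥ -r := by
      have h1 := abs_real_inner_le_norm (z - y₀) σ
      rw [hσn, mul_one] at h1
      have h2 := abs_le.mp (le_of_lt (lt_of_le_of_lt h1 hzy))
      linarith [h2.1]
    have hy₀σ : ε * δ'' ≤ ⟪y₀, σ⟫ := by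
      rw [hy₀_def, real_inner_smul_left]
      exact mul_le_mul_of_nonneg_left huσ hε0.le
    have hzσ : ⟪z, σ⟫ ≥ ε * δ'' - r := by
      have h3 : ⟪z, σ⟫ = ⟪y₀, σ⟫ + ⟪z - y₀, σ⟫ := by
        rw [← inner_add_left]
        congr 1
        abel
      rw [h3]; linarith
    refine ⟨?_, ?_⟩
    · -- cone membership
      show δ * ‖z‖ ≤ |⟪z, ξ⟫|
      rw [← hσabs z]
      have hr2 : r ≤ ε * (1-δ)/4 := min_le_right _ _
      have key : δ * (ε + r) ≤ ε * δ'' - r := by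
        rw [hδ''_def]; nlinarith
      calc δ * ‖z‖ ≤ δ * (ε + r) := by nlinarith
        _ ≤ ε * δ'' - r := key
        _ ≤ ⟪z, σ⟫ := hzσ
        _ ≤ |⟪z, σ⟫| := le_abs_self _
    · -- ball membership
      rw [mem_ball, dist_zero_right]
      have hey : ‖e + y₀‖ ≤ 1 - ε^2/2 := by
        have hsq : ‖e + y₀‖^2 ≤ 1 - ε^2 := by
          rw [norm_add_sq_real, he, hy₀n]
          have h4 : ⟪e, y₀⟫ = ε * ⟪e, u⟫ := by
            rw [hy₀_def, real_inner_smul_right]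
          have hue' : ⟪e, u⟫ ≤ -ε := by
            rw [real_inner_comm]
            calc ⟪u, e⟫ ≤ -(min δ'' c) := hue
              _ = -ε := by rw [hε_def]
          nlinarith
        nlinarith [norm_nonneg (e + y₀)]
      have hr1 : r ≤ ε^2/8 := min_le_left _ _
      have htri : ‖e + z‖ ≤ ‖e + y₀‖ + ‖z - y₀‖ := by
        have h5 := norm_sub_norm_le (e + z) (e + y₀)
        have h6 : (e + z) - (e + y₀) = z - y₀ := by abel
        rw [h6] at h5; linarith
      calc ‖e + z‖ ≤ ‖e + y₀‖ + ‖z - y₀‖ := htri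
        _ < (1 - ε^2/2) + r := by linarith
        _ < 1 - C₄ := by rw [hC_def]; nlinarith
  calc ENNReal.ofReal (volume (ball (0:E) r)).toReal
      = volume (ball (0:E) r) := ENNReal.ofReal_toReal measure_ball_lt_top.ne
    _ = volume (ball y₀ r) := (Measure.addHaar_ball_center volume y₀ r).symm
    _ ≤ _ := measure_mono hsub
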